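/- Let G be a graph and t an integer with 0 ≤ t ≤ χ(G) − 1. Then the minimum of the symset t-chromatic spectrum of G equals t + 2, i.e. m_{χ^t_sym}(G) = t + 2. -/

import Mathlib

/-!
Common framework for symmetric-set colorings of signed graphs
(C. Cappello, E. Steffen, "Symmetric set coloring of signed graphs").

* A signed graph is a `SimpleGraph V` together with a signature
  `σ : Sym2 V → Bool` (`true` = positive edge, `false` = negative edge);
  only the values of `σ` on edges of `G` matter.
* The canonical symmetric set `S_{2k}^t` with `t` self-inverse elements and
  `k` pairs of non-self-inverse elements is `Sym t k := Fin t ⊕ Fin k × Bool`,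
  with negation `symNeg` fixing the `Fin t` part and swapping the Boolean.
-/

namespace SymSet

/-- The canonical symmetric set `S_{2k}^t`. -/
abbrev Sym (t k : ℕ) := Fin t ⊕ Fin k × Bool

/-- Negation on the symmetric set: self-inverse elements are fixed,
the two elements of each pair are exchanged. -/
def symNeg {t k : ℕ} : Sym t k → Sym t k
  | .inl i => .inl i
  | .inr (i, b) => .inr (i, !b)

/-- Action of a sign on a color: a positive sign acts trivially,
a negative sign acts by negation. -/
def signAct {t k : ℕ} (s : Bool) (x : Sym t k) : Sym t k :=
  if s then x else symNeg x

variable {V : Type*}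

/-- A proper `S_{2k}^t`-coloring of the signed graph `(G, σ)`:
`c v ≠ σ(e) · c w` for every edge `e = vw`. -/
def IsProperColoring (G : SimpleGraph V) (σ : Sym2 V → Bool) {t k : ℕ}
    (c : V → Sym t k) : Prop :=
  ∀ ⦃v w : V⦄, G.Adj v w → c v ≠ signAct (σ s(v, w)) (c w)

/-- `(G, σ)` admits a proper `S_{2k}^t`-coloring. -/
def SymColorable (G : SimpleGraph V) (σ : Sym2 V → Bool) (t k : ℕ) : Prop :=
  ∃ c : V → Sym t k, IsProperColoring G σ c

/-- The symset `t`-chromatic number `χ^t_sym(G, σ)`: the least `t + 2k`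
such that `(G, σ)` admits a proper `S_{2k}^t`-coloring. -/
noncomputable def symChromT (G : SimpleGraph V) (σ : Sym2 V → Bool) (t : ℕ) : ℕ :=
  sInf {n | ∃ k, n = t + 2 * k ∧ SymColorable G σ t k}

/-- The chromatic number of the underlying graph, as a natural number. -/
noncomputable def chrom (G : SimpleGraph V) : ℕ := G.chromaticNumber.toNat

/-- The symset chromatic number `χ_sym(G, σ)`: the minimum of
`χ^t_sym(G, σ)` over `0 ≤ t ≤ χ(G)`. -/
noncomputable def symChrom (G : SimpleGraph V) (σ : Sym2 V → Bool) : ℕ :=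
  sInf {n | ∃ t ≤ chrom G, n = symChromT G σ t}

/-- Switching a signature at the vertex set `X = {v | X v = true}`:
the sign of every edge with exactly one end in `X` is reversed. -/
def switch (X : V → Bool) (σ : Sym2 V → Bool) : Sym2 V → Bool :=
  fun e =>
    xor (Sym2.lift ⟨fun u v => xor (X u) (X v), fun u v => by simp [Bool.xor_comm]⟩ e) (σ e)

/-- Two signatures of `G` are equivalent if one is obtained from the other by a
switching (equality of signs is only required on the edges of `G`). -/
def Equivalent (G : SimpleGraph V) (σ σ' : Sym2 V → Bool) : Prop :=
  ∃ X : V → Bool, ∀ e ∈ G.edgeSet, σ' e = switch X σ e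

/-- The number of negative edges of a closed walk. -/
def negCount (σ : Sym2 V → Bool) {G : SimpleGraph V} {u : V} (w : G.Walk u u) : ℕ :=
  (w.edges.filter (fun e => !σ e)).length

/-- `(G, σ)` is balanced: every circuit has sign `+1`,
i.e. an even number of negative edges. -/
def Balanced (G : SimpleGraph V) (σ : Sym2 V → Bool) : Prop :=
  ∀ ⦃u : V⦄ (w : G.Walk u u), w.IsCycle → Even (negCount σ w)

/-- `(G, σ)` is antibalanced: every even circuit has sign `+1` and every odd
circuit has sign `-1`. -/
def Antibalanced (G : SimpleGraph V) (σ : Sym2 V → Bool) : Prop :=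
  ∀ ⦃u : V⦄ (w : G.Walk u u), w.IsCycle → (Even w.length ↔ Even (negCount σ w))

/-- Restriction of a signature to (the induced subgraph on) a vertex subset. -/
def restrict (σ : Sym2 V → Bool) (s : Set V) : Sym2 s → Bool :=
  fun e => σ (Sym2.map Subtype.val e)

/-- A circuit: a connected 2-regular graph. -/
def IsCircuit (G : SimpleGraph V) [Fintype V] [DecidableRel G.Adj] : Prop :=
  G.Connected ∧ G.IsRegularOfDegree 2

/-- The frustration index `l(G, σ)`: the least number of edges whose deletion
makes the signed graph balanced. -/
noncomputable def frustrationIndex (G : SimpleGraph V) (σ : Sym2 V → Bool) : ℕ :=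
  sInf {n | ∃ F : Finset (Sym2 V), F.card = n ∧ Balanced (G.deleteEdges ↑F) σ}

/-- A proper coloring of the signed expansion `±G` (each edge of `G` replaced by
a positive and a negative parallel edge): for each edge `vw` of `G`,
`c v ∉ {c w, -c w}`. -/
def IsProperExpColoring (G : SimpleGraph V) {t k : ℕ} (c : V → Sym t k) : Prop :=
  ∀ ⦃v w : V⦄, G.Adj v w → c v ≠ c w ∧ c v ≠ symNeg (c w)

/-- The symset `t`-chromatic number of the signed expansion `±G`. -/
noncomputable def expSymChromT (G : SimpleGraph V) (t : ℕ) : ℕ :=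
  sInf {n | ∃ k, n = t + 2 * k ∧ ∃ c : V → Sym t k, IsProperExpColoring G c}

end SymSet

/-! With no pairs (`k = 0`) a proper `S_0^t`-colouring is an ordinary `t`-colouring of `G`, which
cannot exist when `t < χ(G)`; hence `χ^t_sym(G, σ) ≥ t + 2` for every `σ`. The all-negative
signature attains `t + 2`: one pair `{s, -s}` suffices, colouring every vertex with `s`. -/

namespace SymSet

section

variable {V : Type*} {G : SimpleGraph V} {σ : Sym2 V → Bool} {t k : ℕ}

@[simp]
lemma signAct_inl (s : Bool) (i : Fin t) : signAct s (Sum.inl i : Sym t k) = Sum.inl i := by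
  cases s <;> rfl

/-- Colouring with the elements `(i, +)` of the pairs works for every signature, since the
sign of an edge can only move `(j, +)` to `(j, ±)`. -/
lemma symColorable_of_colorable (σ : Sym2 V → Bool) (t : ℕ) (h : G.Colorable k) :
    SymColorable G σ t k := by
  obtain ⟨f⟩ := h
  refine ⟨fun v => .inr (f v, true), fun v w hvw heq => f.valid hvw ?_⟩
  cases hs : σ s(v, w) <;> simp_all [signAct, symNeg]

lemma SymColorable.colorable (h : SymColorable G σ t 0) : G.Colorable t := by
  obtain ⟨c, hc⟩ := h
  let f : V → Fin t := fun v => Sum.elim id (fun p => p.1.elim0) (c v)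
  have hf : ∀ v, c v = .inl (f v) := fun v => by
    rcases hcv : c v with i | ⟨i, _⟩
    · simp [f, hcv]
    · exact i.elim0
  exact ⟨⟨f, fun {v w} hvw hfvw => hc hvw (by rw [hf v, hf w, signAct_inl, hfvw])⟩⟩

lemma chrom_le_of_colorable (h : G.Colorable t) : chrom G ≤ t := by
  simpa [chrom] using ENat.toNat_le_toNat h.chromaticNumber_le (ENat.natCast_ne_top t)

lemma symChromT_le (h : SymColorable G σ t k) : symChromT G σ t ≤ t + 2 * k :=
  Nat.sInf_le ⟨k, rfl, h⟩

lemma add_two_le_symChromT (ht : t < chrom G) (σ : Sym2 V → Bool) :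
    t + 2 ≤ symChromT G σ t := by
  have hfin : G.chromaticNumber ≠ ⊤ := fun h => by simp [chrom, h] at ht
  obtain ⟨k, hval, hcol⟩ : symChromT G σ t ∈ {n | ∃ k, n = t + 2 * k ∧ SymColorable G σ t k} :=
    Nat.sInf_mem ⟨_, _, rfl,
      symColorable_of_colorable σ t (SimpleGraph.colorable_of_chromaticNumber_ne_top hfin)⟩
  have hk : k ≠ 0 := by
    rintro rfl
    exact (chrom_le_of_colorable (SymColorable.colorable hcol)).not_gt ht
  omega

lemma symColorable_allNeg (G : SimpleGraph V) (t : ℕ) : SymColorable G (fun _ => false) t 1 :=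
  ⟨fun _ => .inr (0, true), fun _ _ _ => by simp [signAct, symNeg]⟩

end

theorem stmt11_general {V : Type*} (G : SimpleGraph V) (t : ℕ)
    (ht : t < chrom G) :
    IsLeast {n | ∃ σ : Sym2 V → Bool, symChromT G σ t = n} (t + 2) := by
  refine ⟨⟨fun _ => false, ?_⟩, ?_⟩
  · exact (symChromT_le (symColorable_allNeg G t)).antisymm (add_two_le_symChromT ht _)
  · rintro n ⟨σ, rfl⟩
    exact add_two_le_symChromT ht σ

/-- for `0 ≤ t ≤ χ(G) - 1`, the minimum of the symset
`t`-chromatic spectrum of `G` is `t + 2`. -/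
theorem stmt11 {V : Type*} [Fintype V] (G : SimpleGraph V) (t : ℕ)
    (ht : t < chrom G) :
    IsLeast {n | ∃ σ : Sym2 V → Bool, symChromT G σ t = n} (t + 2) :=
  stmt11_general G t ht

end SymSet
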